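/- Let d ≥ 3, λ > 0, δ > 0, ε > 0. Let σ be a finite ℂ^d-valued Borel measure on ℝ^d which is weakly form-bounded: ∫ (((λ−Δ)^{−1/4} f)(x))² |σ|(dx) ≤ δ ‖f‖²_{L²} for all real Schwartz f. Let ρ : ℝ^d → [0,1] be smooth and define the vector field v(x) := ρ(x) · (e^{εΔ}σ)(x), where (e^{εΔ}σ)(x) := ∫ (4πε)^{−d/2} e^{−|x−y|²/(4ε)} σ(dy). Then v is weakly form-bounded with the same bound: ∫ (((λ−Δ)^{−1/4} f)(x))² |v(x)| dx ≤ δ ‖f‖²_{L²} for all real Schwartz f. -/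

import Mathlib

open MeasureTheory Filter Topology
open Set

noncomputable section

abbrev E (d : ℕ) := EuclideanSpace ℝ (Fin d)

/-- The kernel `(λ−Δ)^{−s/2}(x,y)` for real `λ > 0`:
`Γ(s/2)⁻¹ ∫₀^∞ t^{s/2−1} e^{−λt} (4πt)^{−d/2} e^{−|x−y|²/(4t)} dt`. -/
def rker (d : ℕ) (s lam : ℝ) (x y : E d) : ℝ :=
  (Real.Gamma (s / 2))⁻¹ *
    ∫ t in Set.Ioi (0 : ℝ),
      t ^ (s / 2 - 1) * Real.exp (-(lam * t)) *
        ((4 * Real.pi * t) ^ (-(d : ℝ) / 2) * Real.exp (-(‖x - y‖ ^ 2 / (4 * t))))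

/-- The operator `(λ−Δ)^{−s/2}` applied to a function `f`. -/
def rop (d : ℕ) (s lam : ℝ) (f : E d → ℝ) (x : E d) : ℝ :=
  ∫ y, rker d s lam x y * f y

/-- The heat kernel: `e^{εΔ}` is convolution with `(4πε)^{−d/2} e^{−|z|²/(4ε)}`. -/
def heatK (d : ℕ) (ε : ℝ) (z : E d) : ℝ :=
  (4 * Real.pi * ε) ^ (-(d : ℝ) / 2) * Real.exp (-(‖z‖ ^ 2 / (4 * ε)))

/-- A finite `ℂ^d`-valued Borel measure `σ = (σ₁,…,σ_d)` on `ℝ^d`, encoded via the polar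
decomposition of each component: `var i = |σ_i|` is the variation measure of `σ_i` and
`dens i` is the unimodular density, so that `σ_i = dens i • var i`. -/
structure CVecMeasure (d : ℕ) where
  var : Fin d → Measure (E d)
  dens : Fin d → E d → ℂ
  finite : ∀ i, IsFiniteMeasure (var i)
  unit : ∀ i x, ‖dens i x‖ = 1
  dens_meas : ∀ i, Measurable (dens i)

/-- The variation `|σ| := |σ₁| + ⋯ + |σ_d|` of a `ℂ^d`-valued measure. -/
def CVecMeasure.totalVar {d : ℕ} (σ : CVecMeasure d) : Measure (E d) := ∑ i, σ.var i

lemma ofReal_integral_le {α : Type*} [MeasurableSpace α] {μ : Measure α} {f : α → ℝ}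
    (hf : ∀ x, 0 ≤ f x) :
    ENNReal.ofReal (∫ x, f x ∂μ) ≤ ∫⁻ x, ENNReal.ofReal (f x) ∂μ := by
  rcases em (Integrable f μ) with h | h
  · rw [ofReal_integral_eq_lintegral_ofReal h (ae_of_all _ hf)]
  · rw [integral_undef h]; simp

lemma heatK_nonneg (d : ℕ) {ε : ℝ} (hε : 0 < ε) (z : E d) : 0 ≤ heatK d ε z := by
  unfold heatK
  have : (0:ℝ) < 4 * Real.pi * ε := by positivity
  positivity

lemma heatK_continuous (d : ℕ) (ε : ℝ) : Continuous (heatK d ε) := by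
  unfold heatK
  fun_prop

lemma integrable_gauss (d : ℕ) {b : ℝ} (hb : 0 < b) :
    Integrable (fun u : E d => Real.exp (-b * ‖u‖ ^ 2)) := by
  have h := GaussianFourier.integrable_cexp_neg_mul_sq_norm_add (V := E d)
    (b := (b:ℂ)) (by simpa using hb) 0 0
  have := h.norm
  refine this.congr (ae_of_all _ fun u => ?_)
  simp only [zero_mul, add_zero, Complex.norm_exp]
  have h2 : (-(b:ℂ) * ((‖u‖:ℝ):ℂ)^2) = ((-b * ‖u‖^2 : ℝ) : ℂ) := by push_cast; ring
  rw [h2, Complex.ofReal_re]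

lemma lintegral_gauss (d : ℕ) {b : ℝ} (hb : 0 < b) :
    ∫⁻ u : E d, ENNReal.ofReal (Real.exp (-b * ‖u‖ ^ 2))
      = ENNReal.ofReal ((Real.pi / b) ^ ((d:ℝ) / 2)) := by
  rw [← ofReal_integral_eq_lintegral_ofReal (integrable_gauss d hb)
    (ae_of_all _ fun u => (Real.exp_pos _).le)]
  rw [GaussianFourier.integral_rexp_neg_mul_sq_norm hb]
  norm_num [finrank_euclideanSpace_fin]

lemma rker_nonneg (d : ℕ) {s : ℝ} (lam : ℝ) (hs : 0 < s) (x y : E d) :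
    0 ≤ rker d s lam x y := by
  unfold rker
  apply mul_nonneg
  · exact inv_nonneg.2 (Real.Gamma_pos_of_pos (by positivity)).le
  · apply setIntegral_nonneg measurableSet_Ioi
    intro t ht
    have ht' : (0:ℝ) < t := ht
    positivity

lemma measurable_rker (d : ℕ) (s lam : ℝ) :
    Measurable (fun p : E d × E d => rker d s lam p.1 p.2) := by
  unfold rker
  apply Measurable.const_mul
  have h : StronglyMeasurable (fun q : (E d × E d) × ℝ =>
      q.2 ^ (s / 2 - 1) * Real.exp (-(lam * q.2)) *
        ((4 * Real.pi * q.2) ^ (-(d : ℝ) / 2) *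
          Real.exp (-(‖q.1.1 - q.1.2‖ ^ 2 / (4 * q.2))))) := by
    apply Measurable.stronglyMeasurable
    fun_prop
  exact h.integral_prod_right'.measurable

lemma ofReal_integral_le' {α : Type*} [MeasurableSpace α] {μ : Measure α} {f : α → ℝ}
    (hf : 0 ≤ᵐ[μ] f) :
    ENNReal.ofReal (∫ x, f x ∂μ) ≤ ∫⁻ x, ENNReal.ofReal (f x) ∂μ := by
  rcases em (Integrable f μ) with h | h
  · rw [ofReal_integral_eq_lintegral_ofReal h hf]
  · rw [integral_undef h]; simp

lemma measurable_rop (d : ℕ) (s lam : ℝ) {f : E d → ℝ} (hf : Measurable f) :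
    Measurable (rop d s lam f) := by
  unfold rop
  have h : StronglyMeasurable (fun p : E d × E d => rker d s lam p.1 p.2 * f p.2) :=
    ((measurable_rker d s lam).mul (hf.comp measurable_snd)).stronglyMeasurable
  exact h.integral_prod_right'.measurable

lemma lintegral_rker_le (d : ℕ) {s lam : ℝ} (hs : 0 < s) (hlam : 0 < lam) (x : E d) :
    ∫⁻ y, ENNReal.ofReal (rker d s lam x y) ≤ ENNReal.ofReal ((1/lam) ^ (s/2)) := by
  set a := s/2 with ha_def
  have ha : 0 < a := by positivity
  have hΓ : 0 < Real.Gamma a := Real.Gamma_pos_of_pos ha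
  set c := (Real.Gamma a)⁻¹ with hc_def
  have hc : 0 ≤ c := inv_nonneg.2 hΓ.le
  set φ : E d → ℝ → ℝ := fun y t =>
    t ^ (a - 1) * Real.exp (-(lam * t)) *
      ((4 * Real.pi * t) ^ (-(d : ℝ) / 2) * Real.exp (-(‖x - y‖ ^ 2 / (4 * t)))) with hφ
  have hφmeas : Measurable (fun q : E d × ℝ => ENNReal.ofReal (φ q.1 q.2)) := by
    apply Measurable.ennreal_ofReal; fun_prop
  -- step 1 : pointwise bound
  have step1 : ∀ y, ENNReal.ofReal (rker d s lam x y)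
      ≤ ENNReal.ofReal c * ∫⁻ t in Ioi (0:ℝ), ENNReal.ofReal (φ y t) := by
    intro y
    rw [rker, ENNReal.ofReal_mul hc]
    gcongr
    apply ofReal_integral_le'
    rw [EventuallyLE, ae_restrict_iff' measurableSet_Ioi]
    refine ae_of_all _ fun t ht => ?_
    have ht' : (0:ℝ) < t := ht
    have : 0 ≤ φ y t := by rw [hφ]; positivity
    simpa using this
  calc ∫⁻ y, ENNReal.ofReal (rker d s lam x y)
      ≤ ∫⁻ y, ENNReal.ofReal c * ∫⁻ t in Ioi (0:ℝ), ENNReal.ofReal (φ y t) :=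
        lintegral_mono step1
    _ = ENNReal.ofReal c * ∫⁻ y, ∫⁻ t in Ioi (0:ℝ), ENNReal.ofReal (φ y t) :=
        lintegral_const_mul' _ _ ENNReal.ofReal_ne_top
    _ = ENNReal.ofReal c * ∫⁻ t in Ioi (0:ℝ), ∫⁻ y, ENNReal.ofReal (φ y t) := by
        rw [lintegral_lintegral_swap hφmeas.aemeasurable]
    _ ≤ ENNReal.ofReal c * ENNReal.ofReal ((1/lam) ^ a * Real.Gamma a) := by
        gcongr
        have key : ∀ t ∈ Ioi (0:ℝ), (∫⁻ y, ENNReal.ofReal (φ y t))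
            = ENNReal.ofReal (t ^ (a-1) * Real.exp (-(lam * t))) := by
          intro t ht
          have ht' : (0:ℝ) < t := ht
          have hb : (0:ℝ) < (4*t)⁻¹ := by positivity
          have hA : 0 ≤ t ^ (a-1) * Real.exp (-(lam*t)) * (4*Real.pi*t) ^ (-(d:ℝ)/2) := by
            positivity
          have hpt : ∀ y : E d, ENNReal.ofReal (φ y t)
              = ENNReal.ofReal (t ^ (a-1) * Real.exp (-(lam*t)) * (4*Real.pi*t) ^ (-(d:ℝ)/2))
                * ENNReal.ofReal (Real.exp (-(4*t)⁻¹ * ‖y + -x‖^2)) := by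
            intro y
            rw [← ENNReal.ofReal_mul hA, hφ]
            have hnrm : ‖y + -x‖ = ‖x - y‖ := by rw [← sub_eq_add_neg, norm_sub_rev]
            rw [hnrm]
            have hexp : -(4*t)⁻¹ * ‖x - y‖^2 = -(‖x - y‖^2 / (4*t)) := by ring
            rw [hexp]
            ring_nf
          simp_rw [hpt]
          rw [lintegral_const_mul' _ _ ENNReal.ofReal_ne_top]
          rw [lintegral_add_right_eq_self
            (fun u : E d => ENNReal.ofReal (Real.exp (-(4*t)⁻¹ * ‖u‖^2))) (-x)]
          rw [lintegral_gauss d hb, ← ENNReal.ofReal_mul hA]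
          congr 1
          have h4 : Real.pi / (4*t)⁻¹ = 4 * Real.pi * t := by field_simp
          rw [h4, mul_assoc, ← Real.rpow_add (by positivity : (0:ℝ) < 4*Real.pi*t),
            neg_div, neg_add_cancel, Real.rpow_zero, mul_one]
        rw [setLIntegral_congr_fun measurableSet_Ioi key]
        have hnn : 0 ≤ᵐ[volume.restrict (Ioi (0:ℝ))]
            (fun t : ℝ => t ^ (a-1) * Real.exp (-(lam * t))) := by
          rw [EventuallyLE, ae_restrict_iff' measurableSet_Ioi]
          refine ae_of_all _ fun t ht => ?_
          have ht' : (0:ℝ) < t := ht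
          have : 0 ≤ t ^ (a-1) * Real.exp (-(lam * t)) := by positivity
          simpa using this
        have hint : IntegrableOn (fun t : ℝ => t ^ (a - 1) * Real.exp (-(lam * t))) (Ioi 0) := by
          have h1 := Real.GammaIntegral_convergent ha
          have h2 : IntegrableOn
              (fun t : ℝ => Real.exp (-(lam * t)) * (lam * t) ^ (a - 1)) (Ioi 0) := by
            have := (integrableOn_Ioi_comp_mul_left_iff
              (fun u : ℝ => Real.exp (-u) * u ^ (a-1)) 0 hlam).mpr (by simpa using h1)
            simpa using this
          have h3 := h2.const_mul ((lam ^ (a - 1))⁻¹)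
          refine (integrableOn_congr_fun ?_ measurableSet_Ioi).mp h3
          intro t ht
          have ht' : (0:ℝ) < t := ht
          dsimp only
          rw [Real.mul_rpow hlam.le ht'.le]
          have hl : lam ^ (a-1) ≠ 0 := (Real.rpow_pos_of_pos hlam _).ne'
          field_simp
        rw [← ofReal_integral_eq_lintegral_ofReal hint hnn,
          Real.integral_rpow_mul_exp_neg_mul_Ioi ha hlam]
    _ = ENNReal.ofReal ((1/lam) ^ a) := by
        rw [← ENNReal.ofReal_mul hc]
        congr 1
        rw [hc_def]
        field_simp

lemma rop_abs_le (d : ℕ) {s lam : ℝ} (hs : 0 < s) (hlam : 0 < lam) {f : E d → ℝ} {B : ℝ}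
    (hB : ∀ y, |f y| ≤ B) (x : E d) :
    |rop d s lam f x| ≤ (1/lam) ^ (s/2) * B := by
  have hB0 : 0 ≤ B := le_trans (abs_nonneg _) (hB 0)
  have h1 : |rop d s lam f x| ≤ (∫⁻ y, ENNReal.ofReal ‖rker d s lam x y * f y‖).toReal := by
    rw [rop, ← Real.norm_eq_abs]
    exact norm_integral_le_lintegral_norm _
  refine h1.trans ?_
  have h2 : ∫⁻ y, ENNReal.ofReal ‖rker d s lam x y * f y‖
      ≤ ENNReal.ofReal ((1/lam) ^ (s/2)) * ENNReal.ofReal B := by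
    have hpt : ∀ y, ENNReal.ofReal ‖rker d s lam x y * f y‖
        ≤ ENNReal.ofReal (rker d s lam x y) * ENNReal.ofReal B := by
      intro y
      rw [← ENNReal.ofReal_mul (rker_nonneg d lam hs x y)]
      apply ENNReal.ofReal_le_ofReal
      rw [norm_mul, Real.norm_eq_abs, Real.norm_eq_abs,
        abs_of_nonneg (rker_nonneg d lam hs x y)]
      exact mul_le_mul_of_nonneg_left (hB y) (rker_nonneg d lam hs x y)
    refine (lintegral_mono hpt).trans ?_
    rw [lintegral_mul_const' _ _ ENNReal.ofReal_ne_top]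
    exact mul_le_mul_left (lintegral_rker_le d hs hlam x) _
  have h3 := ENNReal.toReal_mono (by finiteness) h2
  refine h3.trans ?_
  rw [← ENNReal.ofReal_mul (by positivity), ENNReal.toReal_ofReal (by positivity)]

lemma rker_shift (d : ℕ) (s lam : ℝ) (x y z : E d) :
    rker d s lam (x + z) (y + z) = rker d s lam x y := by
  unfold rker
  have h : (x + z) - (y + z) = x - y := by abel
  rw [h]

lemma rop_shift (d : ℕ) (s lam : ℝ) (f : E d → ℝ) (y z : E d) :
    rop d s lam f (y + z) = rop d s lam (fun w => f (w + z)) y := by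
  unfold rop
  rw [← integral_add_right_eq_self (fun w => rker d s lam (y + z) w * f w) z]
  congr 1
  funext w
  rw [rker_shift d s lam y w z]

lemma hasTemperateGrowth_add_const {d : ℕ} (z : E d) :
    Function.HasTemperateGrowth (fun x : E d => x + z) := by
  apply Function.HasTemperateGrowth.of_fderiv (k := 1) (C := 1 + ‖z‖)
  · have h : (fderiv ℝ (fun x : E d => x + z)) = fun _ => ContinuousLinearMap.id ℝ (E d) := by
      funext x
      rw [fderiv_add_const]
      exact fderiv_id
    rw [h]
    exact Function.HasTemperateGrowth.const _
  · exact differentiable_id.add_const z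
  · intro x
    have h := norm_add_le x z
    have h1 : (0:ℝ) ≤ ‖x‖ := norm_nonneg x
    have h2 : (0:ℝ) ≤ ‖z‖ := norm_nonneg z
    calc ‖x + z‖ ≤ ‖x‖ + ‖z‖ := h
      _ ≤ (1 + ‖z‖) * (1 + ‖x‖) ^ 1 := by nlinarith

def schwartzTranslate {d : ℕ} (f : SchwartzMap (E d) ℝ) (z : E d) : SchwartzMap (E d) ℝ :=
  SchwartzMap.compCLMOfAntilipschitz (𝕜 := ℝ) (hasTemperateGrowth_add_const z)
    ((IsometryEquiv.addRight z).isometry.antilipschitz) f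

lemma schwartzTranslate_apply {d : ℕ} (f : SchwartzMap (E d) ℝ) (z w : E d) :
    schwartzTranslate f z w = f (w + z) := rfl

lemma lintegral_heatK (d : ℕ) {ε : ℝ} (hε : 0 < ε) :
    ∫⁻ z : E d, ENNReal.ofReal (heatK d ε z) = 1 := by
  have hb : (0:ℝ) < (4*ε)⁻¹ := by positivity
  have hc : (0:ℝ) ≤ (4 * Real.pi * ε) ^ (-(d : ℝ) / 2) := by positivity
  have hpt : ∀ z : E d, ENNReal.ofReal (heatK d ε z)
      = ENNReal.ofReal ((4 * Real.pi * ε) ^ (-(d : ℝ) / 2))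
        * ENNReal.ofReal (Real.exp (-(4*ε)⁻¹ * ‖z‖^2)) := by
    intro z
    rw [← ENNReal.ofReal_mul hc]
    congr 1
    unfold heatK
    congr 2
    ring
  simp_rw [hpt]
  rw [lintegral_const_mul' _ _ ENNReal.ofReal_ne_top, lintegral_gauss d hb,
    ← ENNReal.ofReal_mul hc]
  have h4 : Real.pi / (4*ε)⁻¹ = 4 * Real.pi * ε := by field_simp
  rw [h4, ← Real.rpow_add (by positivity : (0:ℝ) < 4*Real.pi*ε),
    neg_div, neg_add_cancel, Real.rpow_zero]
  exact ENNReal.ofReal_one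

lemma schwartz_bound {d : ℕ} (f : SchwartzMap (E d) ℝ) : ∃ B, ∀ x, |f x| ≤ B := by
  obtain ⟨C, hC⟩ := f.decay 0 0
  refine ⟨C, fun x => ?_⟩
  have := hC.2 x
  simpa [Real.norm_eq_abs] using this

lemma totalVar_finite {d : ℕ} (σ : CVecMeasure d) : IsFiniteMeasure σ.totalVar := by
  constructor
  rw [CVecMeasure.totalVar, Measure.finset_sum_apply]
  refine ENNReal.sum_lt_top.2 fun i _ => ?_
  haveI := σ.finite i
  exact measure_lt_top _ _

lemma measurable_vint {d : ℕ} (ε : ℝ) (σ : CVecMeasure d) (i : Fin d) :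
    Measurable (fun x : E d =>
      ∫ y, ((heatK d ε (x - y) : ℝ) : ℂ) * σ.dens i y ∂(σ.var i)) := by
  haveI := σ.finite i
  have h : StronglyMeasurable (fun p : E d × E d =>
      ((heatK d ε (p.1 - p.2) : ℝ) : ℂ) * σ.dens i p.2) := by
    apply Measurable.stronglyMeasurable
    exact (Complex.measurable_ofReal.comp
      ((heatK_continuous d ε).measurable.comp (measurable_fst.sub measurable_snd))).mul
      ((σ.dens_meas i).comp measurable_snd)
  exact h.integral_prod_right'.measurable

/-- the mollified-and-cut-off vector field `v = ρ · e^{εΔ}σ` of a weakly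
form-bounded measure `σ ∈ F̄^{1/2}_δ` is weakly form-bounded with the same bound `δ`. -/
theorem statement7 (d : ℕ) (hd : 3 ≤ d) (lam δ ε : ℝ) (hlam : 0 < lam) (hδ : 0 < δ)
    (hε : 0 < ε)
    (σ : CVecMeasure d)
    (hσ : ∀ f : SchwartzMap (E d) ℝ,
      (∫ x, (rop d (1/2) lam (⇑f) x) ^ 2 ∂σ.totalVar) ≤ δ * ∫ x, (f x) ^ 2)
    (ρ : E d → ℝ) (hρ_smooth : ContDiff ℝ (⊤ : ℕ∞) ρ) (hρ : ∀ x, 0 ≤ ρ x ∧ ρ x ≤ 1)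
    (v : E d → Fin d → ℂ)
    (hv : ∀ x i, v x i =
      (ρ x : ℂ) * ∫ y, ((heatK d ε (x - y) : ℝ) : ℂ) * σ.dens i y ∂(σ.var i)) :
    ∀ f : SchwartzMap (E d) ℝ,
      (∫ x, (rop d (1/2) lam (⇑f) x) ^ 2 * (∑ i, ‖v x i‖)) ≤
        δ * ∫ x, (f x) ^ 2 := by
  intro f
  haveI hfin : IsFiniteMeasure σ.totalVar := totalVar_finite σ
  have hs : (0:ℝ) < 1/2 := by norm_num
  set g : E d → ℝ := rop d (1/2) lam ⇑f with hg
  have hgmeas : Measurable g := measurable_rop d _ lam f.continuous.measurable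
  obtain ⟨B, hB⟩ := schwartz_bound f
  have hB0 : 0 ≤ B := le_trans (abs_nonneg _) (hB 0)
  set W : E d → ℝ := fun x => ∑ i, ‖v x i‖ with hW
  have hWnn : ∀ x, 0 ≤ W x := fun x => Finset.sum_nonneg fun i _ => norm_nonneg _
  have hWmeas : Measurable W := by
    apply Finset.measurable_sum
    intro i _
    have hrw : (fun x => ‖v x i‖) = fun x =>
        ‖(ρ x : ℂ) * ∫ y, ((heatK d ε (x - y) : ℝ) : ℂ) * σ.dens i y ∂(σ.var i)‖ := by
      funext x; rw [hv x i]
    rw [hrw]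
    exact ((Complex.measurable_ofReal.comp hρ_smooth.continuous.measurable).mul
      (measurable_vint ε σ i)).norm
  have hRHS : 0 ≤ δ * ∫ x, (f x) ^ 2 :=
    mul_nonneg hδ.le (integral_nonneg fun x => sq_nonneg _)
  -- bound each |v x i|
  have habsv : ∀ x i, ‖v x i‖ ≤ ∫ y, heatK d ε (x - y) ∂(σ.var i) := by
    intro x i
    rw [hv x i, norm_mul]
    have h1 : ‖(ρ x : ℂ)‖ ≤ 1 := by
      rw [Complex.norm_real, Real.norm_eq_abs, abs_of_nonneg (hρ x).1]; exact (hρ x).2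
    have h2 : ‖∫ y, ((heatK d ε (x - y) : ℝ) : ℂ) * σ.dens i y ∂(σ.var i)‖
        ≤ ∫ y, heatK d ε (x - y) ∂(σ.var i) := by
      refine (norm_integral_le_integral_norm _).trans ?_
      apply le_of_eq
      congr 1
      funext y
      rw [norm_mul, σ.unit i y, mul_one,
        Complex.norm_real, Real.norm_eq_abs, abs_of_nonneg (heatK_nonneg d hε _)]
    calc ‖(ρ x : ℂ)‖ * ‖∫ y, ((heatK d ε (x - y) : ℝ) : ℂ) *
            σ.dens i y ∂(σ.var i)‖
        ≤ 1 * (∫ y, heatK d ε (x - y) ∂(σ.var i)) := by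
          exact mul_le_mul h1 h2 (norm_nonneg _) zero_le_one
      _ = ∫ y, heatK d ε (x - y) ∂(σ.var i) := one_mul _
  -- pointwise lintegral bound on W
  have hptW : ∀ x, ENNReal.ofReal (W x)
      ≤ ∫⁻ y, ENNReal.ofReal (heatK d ε (x - y)) ∂σ.totalVar := by
    intro x
    rw [CVecMeasure.totalVar, lintegral_finset_sum_measure, hW,
      ENNReal.ofReal_sum_of_nonneg (fun i _ => norm_nonneg _)]
    apply Finset.sum_le_sum
    intro i _
    refine (ENNReal.ofReal_le_ofReal (habsv x i)).trans ?_
    exact ofReal_integral_le' (ae_of_all _ fun y => heatK_nonneg d hε _)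
  -- the key lintegral estimate
  have key : ∫⁻ x, ENNReal.ofReal ((g x) ^ 2 * W x)
      ≤ ENNReal.ofReal (δ * ∫ x, (f x) ^ 2) := by
    have hk_meas : Measurable (fun p : E d × E d =>
        ENNReal.ofReal (heatK d ε (p.1 - p.2))) :=
      ((heatK_continuous d ε).measurable.comp (measurable_fst.sub measurable_snd)).ennreal_ofReal
    have hmeas2 : Measurable (fun p : E d × E d =>
        ENNReal.ofReal ((g p.1) ^ 2) * ENNReal.ofReal (heatK d ε (p.1 - p.2))) :=
      (((hgmeas.pow_const 2).ennreal_ofReal).comp measurable_fst).mul hk_meas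
    have hmeas3 : Measurable (fun p : E d × E d =>
        ENNReal.ofReal ((g (p.2 + p.1)) ^ 2) * ENNReal.ofReal (heatK d ε p.2)) :=
      (((hgmeas.comp (measurable_snd.add measurable_fst)).pow_const 2).ennreal_ofReal).mul
        (((heatK_continuous d ε).measurable.comp measurable_snd).ennreal_ofReal)
    calc ∫⁻ x, ENNReal.ofReal ((g x) ^ 2 * W x)
        ≤ ∫⁻ x, ENNReal.ofReal ((g x) ^ 2)
            * ∫⁻ y, ENNReal.ofReal (heatK d ε (x - y)) ∂σ.totalVar := by
          apply lintegral_mono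
          intro x
          dsimp only
          rw [ENNReal.ofReal_mul (sq_nonneg _)]
          exact mul_le_mul_right (hptW x) _
      _ = ∫⁻ x, ∫⁻ y, ENNReal.ofReal ((g x) ^ 2)
            * ENNReal.ofReal (heatK d ε (x - y)) ∂σ.totalVar := by
          congr 1; funext x
          rw [lintegral_const_mul' _ _ ENNReal.ofReal_ne_top]
      _ = ∫⁻ y, ∫⁻ x, ENNReal.ofReal ((g x) ^ 2)
            * ENNReal.ofReal (heatK d ε (x - y)) ∂volume ∂σ.totalVar :=
          lintegral_lintegral_swap hmeas2.aemeasurable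
      _ = ∫⁻ y, ∫⁻ z, ENNReal.ofReal ((g (z + y)) ^ 2)
            * ENNReal.ofReal (heatK d ε z) ∂volume ∂σ.totalVar := by
          congr 1; funext y
          rw [← lintegral_add_right_eq_self (fun x => ENNReal.ofReal ((g x) ^ 2)
            * ENNReal.ofReal (heatK d ε (x - y))) y]
          congr 1; funext z
          rw [add_sub_cancel_right]
      _ = ∫⁻ z, ∫⁻ y, ENNReal.ofReal ((g (z + y)) ^ 2)
            * ENNReal.ofReal (heatK d ε z) ∂σ.totalVar ∂volume :=
          lintegral_lintegral_swap hmeas3.aemeasurable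
      _ ≤ ∫⁻ z, ENNReal.ofReal (δ * ∫ x, (f x) ^ 2)
            * ENNReal.ofReal (heatK d ε z) ∂volume := by
          apply lintegral_mono
          intro z
          dsimp only
          rw [lintegral_mul_const' _ _ ENNReal.ofReal_ne_top]
          apply mul_le_mul_left
          -- identify the inner integrand with the translated Schwartz function
          have hid : ∀ y, g (z + y) = rop d (1/2) lam (⇑(schwartzTranslate f z)) y := by
            intro y
            rw [add_comm z y, hg, rop_shift]
            congr 1
          have htrB : ∀ w, |(schwartzTranslate f z) w| ≤ B := by
            intro w; rw [schwartzTranslate_apply]; exact hB _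
          have hbound : ∀ y, |rop d (1/2) lam (⇑(schwartzTranslate f z)) y|
              ≤ (1/lam) ^ ((1/2 : ℝ)/2) * B :=
            fun y => rop_abs_le d hs hlam htrB y
          have hint : Integrable
              (fun y => (rop d (1/2) lam (⇑(schwartzTranslate f z)) y) ^ 2) σ.totalVar := by
            refine Integrable.mono' (integrable_const (((1/lam) ^ ((1/2 : ℝ)/2) * B) ^ 2))
              ((measurable_rop d _ lam
                (schwartzTranslate f z).continuous.measurable).pow_const 2).aestronglyMeasurable
              (ae_of_all _ fun y => ?_)
            rw [Real.norm_eq_abs, abs_of_nonneg (sq_nonneg _)]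
            have h := hbound y
            have h0 : (0:ℝ) ≤ (1/lam) ^ ((1/2 : ℝ)/2) * B := by
              refine mul_nonneg ?_ hB0
              positivity
            obtain ⟨h1, h2⟩ := abs_le.mp h
            nlinarith
          simp_rw [hid]
          rw [← ofReal_integral_eq_lintegral_ofReal hint (ae_of_all _ fun y => sq_nonneg _)]
          apply ENNReal.ofReal_le_ofReal
          refine (hσ (schwartzTranslate f z)).trans ?_
          apply mul_le_mul_of_nonneg_left _ hδ.le
          apply le_of_eq
          have : ∀ x, ((schwartzTranslate f z) x) ^ 2 = (fun w => (f w) ^ 2) (x + z) := by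
            intro x; rw [schwartzTranslate_apply]
          simp_rw [this]
          exact integral_add_right_eq_self (fun w => (f w) ^ 2) z
      _ = ENNReal.ofReal (δ * ∫ x, (f x) ^ 2) := by
          rw [lintegral_const_mul' _ _ ENNReal.ofReal_ne_top, lintegral_heatK d hε, mul_one]
  -- conclude
  have hmeasW : AEStronglyMeasurable (fun x => (g x) ^ 2 * W x) volume :=
    ((hgmeas.pow_const 2).mul hWmeas).aestronglyMeasurable
  rw [show (∫ x, (rop d (1/2) lam (⇑f) x) ^ 2 * (∑ i, ‖v x i‖))
      = ∫ x, (g x) ^ 2 * W x from rfl]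
  rw [integral_eq_lintegral_of_nonneg_ae
    (ae_of_all _ fun x => mul_nonneg (sq_nonneg _) (hWnn x)) hmeasW]
  exact ENNReal.toReal_le_of_le_ofReal hRHS key

end
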